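/- Let q₁,…,qₙ be Laurent polynomials over a field of characteristic zero whose minimum degrees (exponents of lowest-order terms) e₁,…,eₙ are pairwise distinct. Then the Wronskian W(q₁,…,qₙ) is a Laurent polynomial whose minimum degree equals e₁+⋯+eₙ − C(n,2). -/

import Mathlib

/-!
Expand the Wronskian by the Leibniz formula. The `i`-th derivative of `q j` has order at least
`e j - i`, with coefficient `c j * (e j)_i` there (`c j` the lowest coefficient of `q j`,
`(x)_i` the falling factorial), so every term has order at least `∑ e - ∑ i = ∑ e - C(n,2)`, and
the coefficient of the Wronskian in that degree is `∏ c j * det ((e j)_i)`. Since `(x)_i` is monic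
of degree `i`, that determinant is the Vandermonde determinant of the `e j`, which is nonzero
because the `e j` are distinct in characteristic zero.
-/

open LaurentPolynomial

/-- Formal derivative of a Laurent polynomial. -/
noncomputable def lderiv {K : Type*} [CommRing K] (p : K[T;T⁻¹]) : K[T;T⁻¹] :=
  Finsupp.sum p.coeff fun k a => LaurentPolynomial.C (a * (k : K)) * LaurentPolynomial.T (k - 1)

/-- The Wronskian of Laurent polynomials: the determinant of the matrix whose
`(i,j)` entry is the `i`-th derivative of `p j`. -/
noncomputable def lW {K : Type*} [CommRing K] {n : ℕ} (p : Fin n → K[T;T⁻¹]) : K[T;T⁻¹] :=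
  Matrix.det (Matrix.of fun i j : Fin n => lderiv^[(i : ℕ)] (p j))

theorem Finsupp.min_support_eq_iff {α M : Type*} [LinearOrder α] [Zero M] {f : α →₀ M} {a : α} :
    f.support.min = a ↔ f a ≠ 0 ∧ ∀ k < a, f k = 0 := by
  refine ⟨fun h => ⟨mem_support_iff.1 (Finset.mem_of_min h), fun k hk => ?_⟩, fun ⟨ha, hlt⟩ => ?_⟩
  · by_contra hne
    exact (Finset.min_le_of_eq (mem_support_iff.2 hne) h).not_gt hk
  · refine le_antisymm (Finset.min_le (mem_support_iff.2 ha)) (Finset.le_min fun k hk => ?_)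
    exact WithTop.coe_le_coe.2 (not_lt.1 fun hka => mem_support_iff.1 hk (hlt k hka))

theorem Equiv.Perm.sum_sub_comp {ι G : Type*} [Fintype ι] [AddCommGroup G] (σ : Equiv.Perm ι)
    (a b : ι → G) : ∑ i, (a i - b (σ i)) = ∑ i, a i - ∑ i, b i := by
  rw [Finset.sum_sub_distrib, Equiv.sum_comp σ b]

theorem Matrix.det_descPochhammer_eval_ne_zero {R : Type*} [CommRing R] [IsDomain R] {n : ℕ}
    {v : Fin n → R} (hv : Function.Injective v) :
    (Matrix.of fun i j : Fin n => (descPochhammer R i).eval (v j)).det ≠ 0 := by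
  have h := Matrix.det_vandermonde_ne_zero_iff.2 hv
  rw [Matrix.det_eval_matrixOfPolynomials_eq_det_vandermonde v _
    (fun i => descPochhammer_natDegree R i) (fun i => monic_descPochhammer R i),
    ← Matrix.det_transpose] at h
  exact h

theorem Fin.sum_val_eq_choose_two (n : ℕ) : ∑ i : Fin n, (i : ℤ) = n.choose 2 := by
  rw [Fin.sum_univ_eq_sum_range (fun i => (i : ℤ)) n, ← Nat.cast_sum, Finset.sum_range_id,
    Nat.choose_two_right]

namespace LaurentPolynomial

section Semiring
variable {R : Type*} [Semiring R] {p r : R[T;T⁻¹]} {a b : ℤ}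

theorem le_of_mem_support_coeff (hp : ∀ k < a, p.coeff k = 0) {m : ℤ}
    (hm : m ∈ p.coeff.support) : a ≤ m :=
  not_lt.1 fun h => Finsupp.mem_support_iff.1 hm (hp m h)

theorem coeff_mul_eq_zero_of_lt_add (hp : ∀ k < a, p.coeff k = 0) (hr : ∀ k < b, r.coeff k = 0)
    {k : ℤ} (hk : k < a + b) : (p * r).coeff k = 0 := by
  classical
  refine Finsupp.notMem_support_iff.1 fun hmem => ?_
  obtain ⟨m₁, hm₁, m₂, hm₂, rfl⟩ :=
    Finset.mem_add.1 (AddMonoidAlgebra.support_coeff_mul_subset p r hmem)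
  have := le_of_mem_support_coeff hp hm₁
  have := le_of_mem_support_coeff hr hm₂
  omega

theorem coeff_mul_add_of_forall_lt (hp : ∀ k < a, p.coeff k = 0) (hr : ∀ k < b, r.coeff k = 0) :
    (p * r).coeff (a + b) = p.coeff a * r.coeff b := by
  refine AddMonoidAlgebra.coeff_mul_add_of_uniqueAdd fun m₁ m₂ hm₁ hm₂ hsum => ?_
  have := le_of_mem_support_coeff hp hm₁
  have := le_of_mem_support_coeff hr hm₂
  omega

end Semiring

section CommSemiring
variable {R : Type*} [CommSemiring R] {ι : Type*} {s : Finset ι} {f : ι → R[T;T⁻¹]} {d : ι → ℤ}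

theorem coeff_prod_eq_zero_of_lt_sum (h : ∀ i ∈ s, ∀ k < d i, (f i).coeff k = 0) :
    ∀ k < ∑ i ∈ s, d i, (∏ i ∈ s, f i).coeff k = 0 := by
  induction s using Finset.cons_induction with
  | empty =>
    intro k hk
    rw [Finset.sum_empty] at hk
    rw [Finset.prod_empty, AddMonoidAlgebra.one_def, AddMonoidAlgebra.coeff_single,
      Finsupp.single_eq_of_ne hk.ne]
  | cons a s ha ih =>
    rw [Finset.prod_cons, Finset.sum_cons]
    exact fun k => coeff_mul_eq_zero_of_lt_add (h a (s.mem_cons_self a))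
      (ih fun i hi => h i (Finset.mem_cons_of_mem hi))

theorem coeff_prod_sum (h : ∀ i ∈ s, ∀ k < d i, (f i).coeff k = 0) :
    (∏ i ∈ s, f i).coeff (∑ i ∈ s, d i) = ∏ i ∈ s, (f i).coeff (d i) := by
  induction s using Finset.cons_induction with
  | empty =>
    rw [Finset.prod_empty, Finset.sum_empty, Finset.prod_empty, AddMonoidAlgebra.one_def,
      AddMonoidAlgebra.coeff_single, Finsupp.single_eq_same]
  | cons a s ha ih =>
    have hs : ∀ i ∈ s, ∀ k < d i, (f i).coeff k = 0 := fun i hi => h i (Finset.mem_cons_of_mem hi)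
    rw [Finset.prod_cons, Finset.sum_cons, Finset.prod_cons, ← ih hs,
      coeff_mul_add_of_forall_lt (h a (s.mem_cons_self a)) (coeff_prod_eq_zero_of_lt_sum hs)]

end CommSemiring

section Det
variable {R : Type*} [CommRing R] {ι : Type*} [Fintype ι] [DecidableEq ι]
  (M : Matrix ι ι R[T;T⁻¹]) {a b : ι → ℤ}

theorem coeff_det (x : ℤ) :
    M.det.coeff x = ∑ σ : Equiv.Perm ι, Equiv.Perm.sign σ • (∏ i, M (σ i) i).coeff x := by
  simp only [Matrix.det_apply, AddMonoidAlgebra.coeff_sum, Finsupp.coe_finsetSum,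
    Finset.sum_apply, AddMonoidAlgebra.coeff_smul_apply]

theorem coeff_det_eq_zero_of_lt (h : ∀ i j, ∀ k < a j - b i, (M i j).coeff k = 0) :
    ∀ k < ∑ j, a j - ∑ i, b i, M.det.coeff k = 0 := by
  intro k hk
  rw [coeff_det]
  refine Finset.sum_eq_zero fun σ _ => ?_
  rw [← σ.sum_sub_comp a b] at hk
  rw [coeff_prod_eq_zero_of_lt_sum (fun i _ => h (σ i) i) k hk, smul_zero]

theorem coeff_det_sum_sub_sum (h : ∀ i j, ∀ k < a j - b i, (M i j).coeff k = 0) :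
    M.det.coeff (∑ j, a j - ∑ i, b i) = (Matrix.of fun i j => (M i j).coeff (a j - b i)).det := by
  rw [coeff_det, Matrix.det_apply]
  refine Finset.sum_congr rfl fun σ _ => ?_
  rw [← σ.sum_sub_comp a b, coeff_prod_sum fun i _ => h (σ i) i]
  rfl

end Det
end LaurentPolynomial

section Deriv
variable {R : Type*} [CommRing R]

theorem coeff_lderiv (p : R[T;T⁻¹]) (m : ℤ) :
    (lderiv p).coeff m = p.coeff (m + 1) * ((m + 1 : ℤ) : R) := by
  classical
  simp only [lderiv, ← single_eq_C_mul_T]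
  rw [AddMonoidAlgebra.coeff_finsuppSum, Finsupp.sum_apply, Finsupp.sum]
  simp only [AddMonoidAlgebra.coeff_single, Finsupp.single_apply, sub_eq_iff_eq_add]
  rw [Finset.sum_ite_eq']
  split_ifs with h
  · rfl
  · rw [Finsupp.notMem_support_iff.1 h, zero_mul]

theorem coeff_iterate_lderiv (p : R[T;T⁻¹]) (i : ℕ) (m : ℤ) :
    (lderiv^[i] p).coeff m = p.coeff (m + i) * (descPochhammer R i).eval ((m + i : ℤ) : R) := by
  induction i generalizing m with
  | zero => simp
  | succ i ih =>
    rw [Function.iterate_succ_apply', coeff_lderiv, ih, descPochhammer_succ_eval]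
    push_cast
    ring_nf

end Deriv

theorem wronskian_laurent_min_degree_general
    {K : Type*} [Field K] [CharZero K] {n : ℕ} (q : Fin n → K[T;T⁻¹]) (e : Fin n → ℤ)
    (he : ∀ i, (Finsupp.support (q i).coeff).min = (e i : WithTop ℤ))
    (hinj : Function.Injective e) :
    lW q ≠ 0 ∧
      (Finsupp.support (lW q).coeff).min = ((∑ i, e i - n.choose 2 : ℤ) : WithTop ℤ) := by
  have hlow (j : Fin n) := Finsupp.min_support_eq_iff.1 (he j)
  have hentry (i j : Fin n) : ∀ k < e j - i, (lderiv^[i] (q j)).coeff k = 0 := fun k hk => by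
    rw [coeff_iterate_lderiv, (hlow j).2 _ (by omega), zero_mul]
  rw [← Fin.sum_val_eq_choose_two]
  have hcoeff : (lW q).coeff (∑ j, e j - ∑ i : Fin n, (i : ℤ)) ≠ 0 := by
    rw [lW, coeff_det_sum_sub_sum (Matrix.of fun i j : Fin n => lderiv^[(i : ℕ)] (q j)) hentry]
    simp only [Matrix.of_apply, coeff_iterate_lderiv, sub_add_cancel]
    refine (Matrix.det_mul_row (fun j => (q j).coeff (e j))
      (Matrix.of fun i j : Fin n => (descPochhammer K i).eval ((e j : ℤ) : K))).trans_ne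
      (mul_ne_zero ?_ (Matrix.det_descPochhammer_eval_ne_zero (Int.cast_injective.comp hinj)))
    exact Finset.prod_ne_zero_iff.2 fun j _ => (hlow j).1
  exact ⟨fun h => hcoeff (by rw [h]; rfl),
    Finsupp.min_support_eq_iff.2 ⟨hcoeff, coeff_det_eq_zero_of_lt _ hentry⟩⟩

theorem wronskian_laurent_min_degree
    {K : Type*} [Field K] [CharZero K] {n : ℕ} (q : Fin n → K[T;T⁻¹]) (e : Fin n → ℤ)
    (hq : ∀ i, q i ≠ 0) (he : ∀ i, (Finsupp.support (q i).coeff).min = (e i : WithTop ℤ))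
    (hinj : Function.Injective e) :
    lW q ≠ 0 ∧
      (Finsupp.support (lW q).coeff).min = ((∑ i, e i - n.choose 2 : ℤ) : WithTop ℤ) :=
  wronskian_laurent_min_degree_general q e he hinj
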